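/- As formal power series in t, with x the compositional inverse of t = x e^x, one has -x - x^2/2 = ∑_{m≥1} (-m)^{m-2} t^m / m!. -/

import Mathlib

section CombPart
open Finset Polynomial

lemma fd_zero_fun {m : ℕ} : (fwdDiff (1:ℚ))^[m] (fun _ : ℚ => (0:ℚ)) = fun _ => 0 := by
  induction m with
  | zero => rfl
  | succ n ih =>
    rw [Function.iterate_succ_apply, show fwdDiff (1:ℚ) (fun _ : ℚ => (0:ℚ)) = fun _ => 0 by
      funext y; simp [fwdDiff], ih]

lemma fd_pow (j : ℕ) : ∀ m : ℕ, j < m → (fwdDiff (1:ℚ))^[m] (fun y : ℚ => y ^ j) = fun _ => 0 := by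
  induction j using Nat.strong_induction_on with
  | _ j IH =>
    intro m hm
    obtain ⟨n, rfl⟩ : ∃ n, m = n + 1 := ⟨m - 1, by omega⟩
    rw [Function.iterate_succ_apply]
    have hΔ : fwdDiff (1:ℚ) (fun y : ℚ => y ^ j)
        = fun y : ℚ => ∑ i ∈ range j, (j.choose i : ℚ) * y ^ i := by
      funext y
      simp only [fwdDiff]
      rw [add_pow]
      rw [Finset.sum_range_succ]
      simp [mul_comm]
    rw [hΔ]
    have : (fun y : ℚ => ∑ i ∈ range j, (j.choose i : ℚ) * y ^ i)
        = fun y : ℚ => ∑ i ∈ range j, (j.choose i : ℚ) • (fun z : ℚ => z ^ i) y := by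
      funext y; simp [smul_eq_mul]
    rw [this]
    have hfun : (fun y : ℚ => ∑ i ∈ range j, (j.choose i : ℚ) • (fun z : ℚ => z ^ i) y)
        = ∑ i ∈ range j, fun z : ℚ => (j.choose i : ℚ) • z ^ i := by
      funext y; simp [Finset.sum_apply]
    rw [hfun, fwdDiff_iter_finset_sum]
    funext y
    rw [Finset.sum_apply]
    apply Finset.sum_eq_zero
    intro i hi
    have hij := mem_range.mp hi
    have h1 : (fun z : ℚ => (j.choose i : ℚ) • z ^ i)
        = (j.choose i : ℚ) • fun z : ℚ => z ^ i := by
      funext z; simp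
    rw [h1, fwdDiff_iter_const_smul, IH i hij n (by omega)]
    simp

lemma alt_sum (m j : ℕ) (h : j < m) :
    ∑ k ∈ range (m + 1), (-1 : ℚ) ^ (m - k) * (m.choose k : ℚ) * (k : ℚ) ^ j = 0 := by
  have h0 := fwdDiff_iter_eq_sum_shift (1:ℚ) (fun y : ℚ => y ^ j) m 0
  rw [fd_pow j m h] at h0
  simp only [zero_add, nsmul_eq_mul, mul_one, zsmul_eq_mul] at h0
  rw [show (∑ k ∈ range (m + 1), (-1 : ℚ) ^ (m - k) * (m.choose k : ℚ) * (k : ℚ) ^ j)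
    = ∑ x ∈ range (m + 1), (((-1:ℤ) ^ (m - x) * (m.choose x : ℤ) : ℤ) : ℚ) * (x:ℚ) ^ j by
      apply Finset.sum_congr rfl; intro k _; push_cast; ring]
  exact h0.symm

noncomputable def Q (m : ℕ) : Polynomial ℚ :=
  ∑ k ∈ Icc 1 m, ((m.choose k : ℚ) * (k : ℚ) ^ (k - 1)) • ((X - C (k : ℚ)) ^ (m - k))

lemma Q_eval_zero {m : ℕ} (hm : 2 ≤ m) : (Q m).eval 0 = 0 := by
  have h1 : (Q m).eval 0 = ∑ k ∈ Icc 1 m, (m.choose k : ℚ) * (k:ℚ)^(k-1) * (-(k:ℚ))^(m-k) := by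
    unfold Q
    rw [eval_finset_sum]
    apply Finset.sum_congr rfl
    intro k _
    simp [eval_pow, smul_eq_mul]
  rw [h1]
  have h2 : ∀ k ∈ Icc 1 m,
      (m.choose k : ℚ) * (k:ℚ)^(k-1) * (-(k:ℚ))^(m-k)
      = (-1:ℚ)^(m-k) * (m.choose k : ℚ) * (k:ℚ)^(m-1) := by
    intro k hk
    obtain ⟨hk1, hk2⟩ := mem_Icc.mp hk
    rw [neg_pow]
    have h : (k:ℚ)^(k-1) * (k:ℚ)^(m-k) = (k:ℚ)^(m-1) := by
      rw [← pow_add]; congr 1; omega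
    linear_combination ((m.choose k : ℚ) * (-1:ℚ)^(m-k)) * h
  rw [Finset.sum_congr rfl h2]
  have h3 : ∑ k ∈ range (m+1), (-1:ℚ)^(m-k) * (m.choose k : ℚ) * (k:ℚ)^(m-1)
      = ∑ k ∈ Icc 1 m, (-1:ℚ)^(m-k) * (m.choose k : ℚ) * (k:ℚ)^(m-1) := by
    rw [Finset.range_eq_Ico, Finset.sum_eq_sum_Ico_succ_bot (by omega), Finset.Ico_add_one_right_eq_Icc]
    rw [Nat.cast_zero, zero_pow (by omega), mul_zero, zero_add]
  rw [← h3]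
  exact alt_sum m (m-1) (by omega)

lemma Q_eq (m : ℕ) (hm : 1 ≤ m) : Q m = (m : ℚ) • X ^ (m - 1) := by
  induction m, hm using Nat.le_induction with
  | base => unfold Q; simp
  | succ n hn ih =>
    have hd : derivative (Q (n+1)) = (n+1 : ℚ) • Q n := by
      unfold Q
      rw [derivative_sum, Finset.smul_sum, sum_Icc_succ_top (by omega)]
      have hlast : derivative ((((n+1).choose (n+1) : ℚ) * ((n+1:ℕ):ℚ)^(n+1-1)) •
          ((X - C ((n+1:ℕ):ℚ)) ^ (n+1-(n+1)))) = 0 := by simp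
      rw [hlast, add_zero]
      apply Finset.sum_congr rfl
      intro k hk
      obtain ⟨hk1, hk2⟩ := mem_Icc.mp hk
      rw [derivative_smul, derivative_pow]
      have hds : derivative (X - C ((k:ℕ):ℚ)) = 1 := by simp
      rw [hds, mul_one]
      rw [show n + 1 - k - 1 = n - k by omega]
      rw [smul_smul, smul_eq_C_mul, smul_eq_C_mul, ← mul_assoc, ← C_mul]
      congr 2
      have e1 : (n+1).choose k * (n + 1 - k) = (n+1) * n.choose k := by
        rw [← Nat.choose_succ_right_eq]
        exact (Nat.add_one_mul_choose_eq n k).symm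
      have h2 : ((n+1).choose k : ℚ) * ((n + 1 - k : ℕ) : ℚ) = ((n+1:ℕ) : ℚ) * (n.choose k : ℚ) := by
        exact_mod_cast congrArg (Nat.cast : ℕ → ℚ) e1
      push_cast at h2 ⊢
      linear_combination ((k:ℚ)^(k-1)) * h2
    have hd2 : derivative (Q (n+1)) = derivative ((((n+1):ℕ):ℚ) • X ^ n) := by
      rw [hd, ih, derivative_smul, derivative_X_pow, smul_smul, smul_eq_C_mul, smul_eq_C_mul,
        ← mul_assoc, ← C_mul]
      congr 2
      push_cast
      ring
    have hR : derivative (Q (n+1) - (((n+1):ℕ):ℚ) • X ^ n) = 0 := by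
      rw [derivative_sub, hd2, sub_self]
    have hdeg := Polynomial.natDegree_eq_zero_of_derivative_eq_zero hR
    have hC := Polynomial.eq_C_of_natDegree_eq_zero hdeg
    have hev : (Q (n+1) - (((n+1):ℕ):ℚ) • X ^ n).eval 0 = 0 := by
      rw [eval_sub, Q_eval_zero (by omega)]
      simp [zero_pow (by omega : n ≠ 0)]
    rw [hC, eval_C] at hev
    rw [hev, map_zero] at hC
    have h0 := sub_eq_zero.mp hC
    rw [show n + 1 - 1 = n from rfl]
    exact h0

lemma Ksum (m : ℕ) (hm : 1 ≤ m) :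
    ∑ k ∈ Icc 1 m, (m.choose k : ℚ) * (k:ℚ)^(k-1) * ((m:ℚ)-(k:ℚ))^(m-k) = (m:ℚ)^m := by
  have h := congrArg (eval (m:ℚ)) (Q_eq m hm)
  unfold Q at h
  rw [eval_finset_sum] at h
  rw [show ∑ k ∈ Icc 1 m, eval (↑m) (((m.choose k : ℚ) * (k : ℚ) ^ (k - 1)) • ((X - C (k : ℚ)) ^ (m - k)))
      = ∑ k ∈ Icc 1 m, (m.choose k : ℚ) * (k:ℚ)^(k-1) * ((m:ℚ)-(k:ℚ))^(m-k) by
    apply Finset.sum_congr rfl; intro k _; simp [smul_eq_mul, mul_assoc]] at h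
  rw [h]
  rw [eval_smul, eval_pow, eval_X, smul_eq_mul, ← pow_succ']
  congr 1
  omega

lemma Bsum (m : ℕ) (hm : 1 ≤ m) :
    ∑ k ∈ Icc 1 (m-1), (m.choose k : ℚ) * (k:ℚ)^(k-1) * ((m:ℚ)-(k:ℚ))^(m-k)
      = (m:ℚ)^m - (m:ℚ)^(m-1) := by
  obtain ⟨n, rfl⟩ : ∃ n, m = n + 1 := ⟨m - 1, by omega⟩
  have h := Ksum (n+1) hm
  rw [sum_Icc_succ_top (by omega)] at h
  rw [show (n+1:ℕ) - (n+1) = 0 from by omega] at h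
  simp only [Nat.choose_self, Nat.cast_one, one_mul, pow_zero, mul_one] at h
  rw [show n + 1 - 1 = n from rfl] at h ⊢
  linarith

lemma Ssum (m : ℕ) (hm : 1 ≤ m) :
    ∑ k ∈ Icc 1 (m-1), (m.choose k : ℚ) * (k:ℚ)^k * ((m:ℚ)-(k:ℚ))^(m-k-1)
      = (m:ℚ)^m - (m:ℚ)^(m-1) := by
  rw [← Bsum m hm]
  apply Finset.sum_nbij' (i := fun k => m - k) (j := fun k => m - k)
  · intro a ha; simp only [mem_Icc] at *; omega
  · intro a ha; simp only [mem_Icc] at *; omega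
  · intro a ha; simp only [mem_Icc] at ha; omega
  · intro a ha; simp only [mem_Icc] at ha; omega
  · intro a ha
    simp only [mem_Icc] at ha
    have h1 : m.choose (m - a) = m.choose a := Nat.choose_symm (by omega)
    have h2 : ((m - a : ℕ) : ℚ) = (m:ℚ) - (a:ℚ) := by
      rw [Nat.cast_sub (by omega)]
    have h4 : m - (m - a) = a := by omega
    rw [h1, h2, h4, show ((m:ℚ) - ((m:ℚ) - (a:ℚ))) = (a:ℚ) by ring]
    ring

lemma Asum (m : ℕ) (hm : 2 ≤ m) :
    (m:ℚ) * ∑ k ∈ Icc 1 (m-1), (m.choose k : ℚ) * (k:ℚ)^(k-1) * ((m:ℚ)-(k:ℚ))^(m-k-1)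
      = 2*((m:ℚ)^m - (m:ℚ)^(m-1)) := by
  rw [Finset.mul_sum]
  have key : ∀ k ∈ Icc 1 (m-1),
      (m:ℚ) * ((m.choose k : ℚ) * (k:ℚ)^(k-1) * ((m:ℚ)-(k:ℚ))^(m-k-1))
      = (m.choose k : ℚ) * (k:ℚ)^k * ((m:ℚ)-(k:ℚ))^(m-k-1)
        + (m.choose k : ℚ) * (k:ℚ)^(k-1) * ((m:ℚ)-(k:ℚ))^(m-k) := by
    intro k hk
    simp only [mem_Icc] at hk
    have e1 : (k:ℚ)^k = (k:ℚ)^(k-1) * (k:ℚ) := by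
      rw [← pow_succ]; congr 1; omega
    have e2 : ((m:ℚ)-(k:ℚ))^(m-k) = ((m:ℚ)-(k:ℚ))^(m-k-1) * ((m:ℚ)-(k:ℚ)) := by
      rw [← pow_succ]; congr 1; omega
    rw [e1, e2]
    ring
  rw [Finset.sum_congr rfl key, Finset.sum_add_distrib, Ssum m (by omega), Bsum m (by omega)]
  ring

end CombPart

open PowerSeries

/-- For a formal power series `f` with zero constant coefficient, `expOf f` is the
formal power series `e^f = ∑_j f^j / j!`. -/
noncomputable def expOf (f : PowerSeries ℚ) : PowerSeries ℚ :=
  PowerSeries.mk fun k =>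
    ∑ j ∈ Finset.range (k + 1), (PowerSeries.coeff k (f ^ j)) / j.factorial

section PSPart
open Finset

lemma coeff_pow_zero_of_lt {f : PowerSeries ℚ} (hf : constantCoeff f = 0) {n j : ℕ}
    (h : n < j) : coeff n (f ^ j) = 0 := by
  have h1 : (X : PowerSeries ℚ) ^ j ∣ f ^ j :=
    pow_dvd_pow_of_dvd (PowerSeries.X_dvd_iff.mpr hf) j
  exact PowerSeries.X_pow_dvd_iff.mp h1 n h

lemma coeff_expOf_eq {f : PowerSeries ℚ} (hf : constantCoeff f = 0) {n k : ℕ} (h : n ≤ k) :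
    coeff n (expOf f) = coeff n (∑ j ∈ range (k+1), ((j.factorial : ℚ))⁻¹ • f ^ j) := by
  rw [expOf, coeff_mk, map_sum]
  simp only [LinearMap.map_smul, smul_eq_mul]
  have hrw : ∀ j : ℕ, coeff n (f^j) / (j.factorial:ℚ) = (j.factorial:ℚ)⁻¹ * coeff n (f^j) :=
    fun j => by rw [div_eq_mul_inv, mul_comm]
  simp only [hrw]
  refine Finset.sum_subset (Finset.range_subset_range.mpr (by omega)) (fun j hj hnj => ?_)
  rw [coeff_pow_zero_of_lt hf (by simp only [Finset.mem_range] at hnj; omega), mul_zero]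

lemma constantCoeff_expOf (f : PowerSeries ℚ) : constantCoeff (expOf f) = 1 := by
  rw [← coeff_zero_eq_constantCoeff, expOf, coeff_mk]
  simp

lemma coeff_mul_congr {k : ℕ} {p g g' : PowerSeries ℚ}
    (h : ∀ b ≤ k, coeff b g = coeff b g') :
    coeff k (p * g) = coeff k (p * g') := by
  rw [coeff_mul, coeff_mul]
  apply Finset.sum_congr rfl
  intro q hq
  rw [Finset.HasAntidiagonal.mem_antidiagonal] at hq
  rw [h q.2 (by omega)]

lemma deriv_expOf {f : PowerSeries ℚ} (hf : constantCoeff f = 0) :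
    d⁄dX ℚ (expOf f) = d⁄dX ℚ f * expOf f := by
  ext k
  rw [PowerSeries.coeff_derivative]
  rw [coeff_expOf_eq hf (le_refl (k+1))]
  rw [show coeff (k+1) (∑ j ∈ range (k+2), ((j.factorial : ℚ))⁻¹ • f ^ j) * ((k:ℚ)+1)
      = coeff k (d⁄dX ℚ (∑ j ∈ range (k+2), ((j.factorial : ℚ))⁻¹ • f ^ j)) by
    rw [PowerSeries.coeff_derivative]]
  have hder : d⁄dX ℚ (∑ j ∈ range (k+2), ((j.factorial : ℚ))⁻¹ • f ^ j)
      = d⁄dX ℚ f * (∑ j ∈ range (k+1), ((j.factorial : ℚ))⁻¹ • f ^ j) := by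
    rw [map_sum]
    rw [Finset.sum_range_succ']
    simp only [pow_zero]
    rw [show d⁄dX ℚ (((Nat.factorial 0 : ℚ))⁻¹ • (1 : PowerSeries ℚ)) = 0 by
      simp]
    rw [add_zero]
    rw [Finset.mul_sum]
    apply Finset.sum_congr rfl
    intro i _
    rw [Derivation.map_smul, Derivation.leibniz_pow]
    rw [show i + 1 - 1 = i from rfl]
    rw [smul_eq_mul (α := PowerSeries ℚ), nsmul_eq_mul]
    rw [PowerSeries.smul_eq_C_mul, PowerSeries.smul_eq_C_mul]
    rw [← map_natCast (C (R := ℚ)) (i+1), ← mul_assoc, ← map_mul]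
    rw [show (((i+1).factorial : ℚ))⁻¹ * ((i + 1 : ℕ) : ℚ) = ((i.factorial : ℚ))⁻¹ by
      rw [Nat.factorial_succ]
      push_cast
      rw [mul_inv]
      field_simp]
    ring
  rw [hder]
  exact (coeff_mul_congr (fun b hb => coeff_expOf_eq hf hb)).symm

lemma Icc_to_range (n : ℕ) (g : ℕ → ℚ) :
    ∑ k ∈ Icc 1 n, g k = ∑ i ∈ range n, g (i+1) := by
  rw [← Finset.Ico_add_one_right_eq_Icc, Finset.sum_Ico_eq_sum_range]
  simp [add_comm]

section Main
variable (x : PowerSeries ℚ) (hx0 : PowerSeries.constantCoeff x = 0)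
  (hx : x * expOf x = X)

include hx0 hx

lemma hODE : X * (d⁄dX ℚ x + x * d⁄dX ℚ x) = x := by
  have h1 : d⁄dX ℚ (x * expOf x) = 1 := by rw [hx, PowerSeries.derivative_X]
  rw [Derivation.leibniz, deriv_expOf hx0] at h1
  have h2 := congrArg (fun z => x * z) h1
  simp only [smul_eq_mul, mul_one] at h1 h2
  calc X * (d⁄dX ℚ x + x * d⁄dX ℚ x)
      = x * (x * (d⁄dX ℚ x * expOf x) + expOf x * d⁄dX ℚ x) := by rw [← hx]; ring
    _ = x := h2

lemma coeff_one_x : coeff 1 x = 1 := by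
  have h := congrArg (coeff 1) hx
  rw [PowerSeries.coeff_mul, Finset.Nat.sum_antidiagonal_eq_sum_range_succ_mk] at h
  rw [Finset.sum_range_succ, Finset.sum_range_one] at h
  simp only [PowerSeries.coeff_zero_eq_constantCoeff, hx0, zero_mul, zero_add,
    constantCoeff_expOf, Nat.sub_self] at h
  rw [PowerSeries.coeff_one_X] at h
  simpa using h

lemma recurrence (n : ℕ) :
    coeff (n+1) x = coeff (n+1) x * ((n:ℚ)+1)
      + ∑ i ∈ range (n+1), coeff i x * (((n-i:ℕ):ℚ)+1) * coeff (n-i+1) x := by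
  have h := congrArg (coeff (n+1)) (hODE x hx0 hx).symm
  rw [PowerSeries.coeff_succ_X_mul, map_add, PowerSeries.coeff_derivative,
    PowerSeries.coeff_mul, Finset.Nat.sum_antidiagonal_eq_sum_range_succ_mk] at h
  refine h.trans ?_
  congr 1
  apply Finset.sum_congr rfl
  intro i _
  rw [PowerSeries.coeff_derivative]
  ring

lemma coeff_x : ∀ m : ℕ, 1 ≤ m → coeff m x = (-(m:ℚ))^(m-1) / m.factorial := by
  intro m
  induction m using Nat.strong_induction_on with
  | _ m IH =>
    intro hm
    obtain ⟨n, rfl⟩ : ∃ n, m = n + 1 := ⟨m - 1, by omega⟩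
    rcases Nat.eq_zero_or_pos n with rfl | hn
    · rw [coeff_one_x x hx0 hx]; norm_num
    have hrec := recurrence x hx0 hx n
    have hsum : ∑ i ∈ range (n+1), coeff i x * (((n-i:ℕ):ℚ)+1) * coeff (n-i+1) x
        = (-1:ℚ)^(n+1) / ((n+1).factorial : ℚ)
          * (((n+1:ℕ):ℚ)^(n+1) - ((n+1:ℕ):ℚ)^n) := by
      rw [Finset.sum_range_succ']
      rw [show coeff 0 x * (((n-0:ℕ):ℚ)+1) * coeff (n-0+1) x = 0 by
        rw [PowerSeries.coeff_zero_eq_constantCoeff, hx0]; ring, add_zero]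
      rw [← Icc_to_range n (fun k => coeff k x * (((n-k:ℕ):ℚ)+1) * coeff (n-k+1) x)]
      have hpt : ∀ k ∈ Icc 1 n, coeff k x * (((n-k:ℕ):ℚ)+1) * coeff (n-k+1) x
          = (-1:ℚ)^(n+1) / ((n+1).factorial:ℚ)
            * (((n+1).choose k : ℚ) * (k:ℚ)^(k-1) * (((n+1:ℕ):ℚ)-(k:ℚ))^(n+1-k)) := by
        intro k hk
        rw [mem_Icc] at hk
        obtain ⟨hk1, hk2⟩ := hk
        have hnk1 : n - k + 1 = n + 1 - k := by omega
        rw [hnk1]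
        rw [IH k (by omega) hk1, IH (n+1-k) (by omega) (by omega)]
        have hcast2 : ((n-k:ℕ):ℚ) + 1 = ((n+1-k:ℕ):ℚ) := by
          rw [Nat.cast_sub (by omega), Nat.cast_sub (by omega)]; push_cast; ring
        rw [hcast2]
        have hcast : (((n+1:ℕ):ℚ)-(k:ℚ)) = ((n+1-k:ℕ):ℚ) := by
          rw [Nat.cast_sub (by omega)]
        rw [hcast]
        rw [Nat.cast_choose ℚ (by omega : k ≤ n+1)]
        rw [neg_pow, neg_pow]
        have hfk : (k.factorial : ℚ) ≠ 0 := Nat.cast_ne_zero.mpr (Nat.factorial_ne_zero k)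
        have hfl : ((n+1-k).factorial : ℚ) ≠ 0 := Nat.cast_ne_zero.mpr (Nat.factorial_ne_zero _)
        have hfn : (((n+1).factorial) : ℚ) ≠ 0 := Nat.cast_ne_zero.mpr (Nat.factorial_ne_zero _)
        have hll : ((n+1-k:ℕ):ℚ)^(n+1-k-1) * ((n+1-k:ℕ):ℚ) = ((n+1-k:ℕ):ℚ)^(n+1-k) := by
          rw [← pow_succ]; congr 1; omega
        have hsgn : (-1:ℚ)^(k-1) * (-1:ℚ)^(n+1-k-1) = (-1:ℚ)^(n+1) := by
          rw [← pow_add, show k - 1 + (n+1-k-1) = n - 1 by omega,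
            show n + 1 = (n - 1) + 2 by omega, pow_add]
          norm_num
        field_simp
        rw [neg_pow]
        simp only [one_pow, mul_one]
        rw [neg_pow ((n+1-k:ℕ):ℚ), ← hll, ← hsgn]
        ring
      rw [Finset.sum_congr rfl hpt, ← Finset.mul_sum]
      rw [show Icc 1 n = Icc 1 ((n+1)-1) from rfl]
      rw [Bsum (n+1) (by omega)]
      norm_num
    have hn0 : (n:ℚ) ≠ 0 := Nat.cast_ne_zero.mpr (by omega)
    have hfn : (((n+1).factorial) : ℚ) ≠ 0 := Nat.cast_ne_zero.mpr (Nat.factorial_ne_zero _)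
    rw [show (n+1) - 1 = n from rfl, neg_pow]
    have hps : ((n+1:ℕ):ℚ)^(n+1) = ((n+1:ℕ):ℚ)^n * ((n:ℚ)+1) := by
      rw [pow_succ]; push_cast; ring
    rw [hsum] at hrec
    rw [eq_div_iff hfn]
    apply mul_right_cancel₀ hn0
    field_simp at hrec
    push_cast at hrec hps ⊢
    linear_combination (-1:ℚ) * hrec + (-1:ℚ)^n * hps


end Main
end PSPart

/-- If `x(t)` is the compositional inverse of `x eˣ`, i.e. the formal power series with
zero constant term satisfying `x(t) e^{x(t)} = t`, then
`-x - x²/2 = ∑_{m ≥ 1} (-m)^(m-2) t^m / m!` as formal power series in `t`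
(the exponent `m - 2` equals `-1` when `m = 1`, so the coefficients are written with an
integer power in `ℚ`). -/
theorem inverse_series_identity (x : PowerSeries ℚ)
    (hx0 : PowerSeries.constantCoeff x = 0)
    (hx : x * expOf x = X) :
    -x - PowerSeries.C (1/2 : ℚ) * x ^ 2 =
      PowerSeries.mk fun m => (-(m : ℚ)) ^ ((m : ℤ) - 2) / m.factorial := by
  have ha := coeff_x x hx0 hx
  have ha0 : coeff 0 x = 0 := by
    rw [PowerSeries.coeff_zero_eq_constantCoeff]; exact hx0
  ext m
  rw [PowerSeries.coeff_mk, map_sub, map_neg, PowerSeries.coeff_C_mul, pow_two,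
    PowerSeries.coeff_mul, Finset.Nat.sum_antidiagonal_eq_sum_range_succ_mk]
  rcases m with _ | m
  · -- m = 0
    rw [Finset.sum_range_one]
    simp only [ha0]
    norm_num
  rcases m with _ | p
  · -- m = 1
    rw [ha 1 le_rfl, Finset.sum_range_succ, Finset.sum_range_one, ha0]
    norm_num
  · -- m = p + 2
    set m := p + 2 with hmdef
    clear_value m
    have hm2 : 2 ≤ m := by omega
    have hm0 : (m:ℚ) ≠ 0 := by positivity
    have hfm : ((m.factorial:ℚ)) ≠ 0 := Nat.cast_ne_zero.mpr (Nat.factorial_ne_zero _)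
    have hA := Asum m hm2
    have hxx : ∑ i ∈ Finset.range (m+1), coeff (i, m - i).1 x * coeff (i, m - i).2 x
        = (-1:ℚ)^m / (m.factorial:ℚ)
          * ∑ k ∈ Finset.Icc 1 (m-1), (m.choose k : ℚ) * (k:ℚ)^(k-1) * ((m:ℚ)-(k:ℚ))^(m-k-1) := by
      simp only
      rw [Finset.sum_range_succ, show m - m = 0 by omega, ha0, mul_zero, add_zero]
      have hstep : ∑ i ∈ Finset.range m, coeff i x * coeff (m - i) x
          = ∑ i ∈ Finset.range (p+1), coeff (i+1) x * coeff (m - (i+1)) x := by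
        rw [show (Finset.range m) = Finset.range ((p+1)+1) by rw [hmdef], Finset.sum_range_succ', ha0, zero_mul,
          add_zero]
      rw [hstep, ← Icc_to_range (p+1) (fun k => coeff k x * coeff (m - k) x)]
      rw [show p + 1 = m - 1 by omega]
      rw [Finset.mul_sum]
      apply Finset.sum_congr rfl
      intro k hk
      rw [Finset.mem_Icc] at hk
      obtain ⟨hk1, hk2⟩ := hk
      rw [ha k (by omega), ha (m-k) (by omega)]
      have hfk : (k.factorial : ℚ) ≠ 0 := Nat.cast_ne_zero.mpr (Nat.factorial_ne_zero k)
      have hfl : ((m-k).factorial : ℚ) ≠ 0 := Nat.cast_ne_zero.mpr (Nat.factorial_ne_zero _)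
      rw [Nat.cast_choose ℚ (by omega : k ≤ m)]
      have hcast : ((m:ℚ) - (k:ℚ)) = ((m-k:ℕ):ℚ) := by
        rw [Nat.cast_sub (by omega)]
      rw [hcast, neg_pow, neg_pow]
      have hsgn : (-1:ℚ)^(k-1) * (-1:ℚ)^(m-k-1) = (-1:ℚ)^m := by
        rw [← pow_add, show k - 1 + (m-k-1) = m - 2 by omega,
          show m = (m - 2) + 2 by omega, pow_add]
        norm_num
      field_simp
      simp only [one_pow, mul_one]
      rw [neg_pow ((m-k:ℕ):ℚ), ← hsgn]
      ring
    rw [hxx]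
    rw [ha m (by omega)]
    -- remaining scalar identity
    rw [show ((m:ℕ):ℤ) - 2 = ((m-2:ℕ):ℤ) by omega, zpow_natCast]
    have h1 : (m:ℚ)^(m-1) = (m:ℚ)^(m-2) * (m:ℚ) := by
      rw [← pow_succ]; congr 1; omega
    have h2 : (m:ℚ)^m = (m:ℚ)^(m-2) * (m:ℚ) * (m:ℚ) := by
      rw [← pow_succ, ← pow_succ]; congr 1; omega
    have hs1 : (-1:ℚ)^(m-1) = (-1:ℚ)^(m-2) * (-1) := by
      rw [← pow_succ]; congr 1; omega
    have hs2 : (-1:ℚ)^(m-2) * (-1:ℚ)^2 = (-1:ℚ)^m := by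
      rw [← pow_add]; congr 1; omega
    have hneg1 : (-(m:ℚ))^(m-1) = (-1:ℚ)^(m-1) * (m:ℚ)^(m-1) := neg_pow _ _
    have hneg2 : (-(m:ℚ))^(m-2) = (-1:ℚ)^(m-2) * (m:ℚ)^(m-2) := neg_pow _ _
    have hS : (-1:ℚ)^m * (∑ k ∈ Finset.Icc 1 (m-1), (m.choose k : ℚ) * (k:ℚ)^(k-1) * ((m:ℚ)-(k:ℚ))^(m-k-1))
        = (-1:ℚ)^m * (2*((m:ℚ)^(m-2)*(m:ℚ) - (m:ℚ)^(m-2))) := by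
      apply mul_left_cancel₀ hm0
      linear_combination ((-1:ℚ)^m) * hA + (2*(-1:ℚ)^m) * h2 - (2*(-1:ℚ)^m) * h1
    field_simp
    rw [hS, hneg1, hneg2, hs1, h1, ← hs2]
    ring
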